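/- arXiv:1212.2537 — 4 statements merged into one kernel-verified Lean document; each statement's English description precedes it below -/
import Mathlib

section
/- For real numbers F1, F2 in [0,1] and I1, I2 in [0,1] satisfying I1 + I2 ≤ 1, F1 ≥ 2^(1 - I1) - 1, and F2 ≥ 2^(1 - I2) - 1, it holds that 2·F1 + F2 ≥ 1 and F1 + 2·F2 ≥ 1. -/
/-! With `u = 2^(1-I1)` and `v = 2^(1-I2)` the hypotheses give `F1 ≥ u - 1`, `F2 ≥ v - 1` and,
from `I1 + I2 ≤ 1`, `u v ≥ 2`. By AM-GM, `2u + v ≥ 2√(2uv) ≥ 4`, which is `2F1 + F2 ≥ 1`;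
the other inequality is symmetric. -/

lemma Real.le_rpow_mul_rpow_of_one_le_add {b x y : ℝ} (hb : 1 ≤ b) (hxy : 1 ≤ x + y) :
    b ≤ b ^ x * b ^ y := by
  rw [← Real.rpow_add (by linarith)]
  simpa using Real.rpow_le_rpow_of_exponent_le hb hxy

lemma four_le_two_mul_add_of_two_le_mul {u v : ℝ} (hu : 0 < u) (huv : 2 ≤ u * v) :
    4 ≤ 2 * u + v := by
  have hv : 0 < v := pos_of_mul_pos_right (by linarith) hu.le
  nlinarith [sq_nonneg (2 * u - v)]

theorem fidelity_uncertainty_general (F1 F2 I1 I2 : ℝ)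
    (hsum : I1 + I2 ≤ 1)
    (h1 : F1 ≥ (2:ℝ) ^ (1 - I1) - 1) (h2 : F2 ≥ (2:ℝ) ^ (1 - I2) - 1) :
    2 * F1 + F2 ≥ 1 ∧ F1 + 2 * F2 ≥ 1 := by
  have huv : 2 ≤ (2:ℝ) ^ (1 - I1) * (2:ℝ) ^ (1 - I2) :=
    Real.le_rpow_mul_rpow_of_one_le_add one_le_two (by linarith)
  have hu : 0 < (2:ℝ) ^ (1 - I1) := by positivity
  have hv : 0 < (2:ℝ) ^ (1 - I2) := by positivity
  constructor
  · linarith [four_le_two_mul_add_of_two_le_mul hu huv]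
  · linarith [four_le_two_mul_add_of_two_le_mul hv (by rwa [mul_comm] at huv)]

/-- Fidelity uncertainty relation (numerical content of Lemma 3):
for `F1, F2, I1, I2 ∈ [0,1]` with `I1 + I2 ≤ 1`, `F1 ≥ 2^(1-I1) - 1` and
`F2 ≥ 2^(1-I2) - 1`, one has `2F1 + F2 ≥ 1` and `F1 + 2F2 ≥ 1`. -/
theorem fidelity_uncertainty (F1 F2 I1 I2 : ℝ)
    (hF1 : F1 ∈ Set.Icc (0:ℝ) 1) (hF2 : F2 ∈ Set.Icc (0:ℝ) 1)
    (hI1 : I1 ∈ Set.Icc (0:ℝ) 1) (hI2 : I2 ∈ Set.Icc (0:ℝ) 1)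
    (hsum : I1 + I2 ≤ 1)
    (h1 : F1 ≥ (2:ℝ) ^ (1 - I1) - 1) (h2 : F2 ≥ (2:ℝ) ^ (1 - I2) - 1) :
    2 * F1 + F2 ≥ 1 ∧ F1 + 2 * F2 ≥ 1 :=
  fidelity_uncertainty_general F1 F2 I1 I2 hsum h1 h2
end

section
/- Let τ^{AB} = (id ⊗ N)(Φ^{AA'}) where Φ is the maximally entangled qubit state and N is a quantum channel, and let |ψ⟩^{ABCR} be the corresponding channel state (1/√2) Σ_z |z⟩^A|z⟩^C U_N|z⟩^{A'}. Then I(Z^A;B)_ψ - I(Z^A;R)_ψ = H(B)_τ - H(AB)_τ, i.e., the difference of amplitude-information to Bob and to the reservoir equals the coherent information of N. -/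
open scoped ComplexConjugate

/-- Von Neumann entropy (base 2) of a matrix. -/
noncomputable def vnEntropy {n : Type*} [Fintype n] [DecidableEq n]
    (ρ : Matrix n n ℂ) : ℝ :=
  if h : ρ.IsHermitian then -∑ i, h.eigenvalues i * Real.logb 2 (h.eigenvalues i) else 0

/-- Partial trace over the first tensor factor. -/
noncomputable def ptraceLeft {α β : Type*} [Fintype α]
    (M : Matrix (α × β) (α × β) ℂ) : Matrix β β ℂ :=
  Matrix.of fun i j => ∑ a, M (a, i) (a, j)

/-- Partial trace over the second tensor factor. -/
noncomputable def ptraceRight {α β : Type*} [Fintype β]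
    (M : Matrix (α × β) (α × β) ℂ) : Matrix α α ℂ :=
  Matrix.of fun i j => ∑ b, M (i, b) (j, b)

/-- Quantum mutual information `I(A;B) = H(A) + H(B) - H(AB)` of a bipartite state. -/
noncomputable def mutInfo {α β : Type*} [Fintype α] [Fintype β]
    [DecidableEq α] [DecidableEq β] (M : Matrix (α × β) (α × β) ℂ) : ℝ :=
  vnEntropy (ptraceRight M) + vnEntropy (ptraceLeft M) - vnEntropy M

/-!
The state `ψ^{ABCR}` is pure, with `ψ^{AB}` the cq state of `Z` and `B` and `ψ^{CR}` (a copy of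
`Z` together with `R`) the cq state of `Z` and `R`, so `H(ZB) = H(ZR)`. Likewise `τ^{AB}` is
purified by `R`, so `H(R) = H(AB)_τ`. The marginals on `Z` of both cq states coincide and the
marginal on `B` is `τ^B`; the mutual informations then telescope to `H(B)_τ - H(AB)_τ`.
Complementary marginals of a pure state have equal entropy because `Ψ Ψᴴ` and `Ψᴴ Ψ` have
the same nonzero eigenvalues, and `0 log 0 = 0`.
-/

open Polynomial Matrix

theorem Matrix.roots_charpoly_mul_add_replicate_zero {K m n : Type*} [Field K]
    [Fintype m] [DecidableEq m] [Fintype n] [DecidableEq n] (A : Matrix m n K) (B : Matrix n m K) :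
    (A * B).charpoly.roots + Multiset.replicate (Fintype.card n) 0 =
      (B * A).charpoly.roots + Multiset.replicate (Fintype.card m) 0 := by
  have h := congrArg Polynomial.roots (charpoly_mul_comm' A B)
  rwa [roots_mul (mul_ne_zero (pow_ne_zero _ X_ne_zero) (charpoly_monic _).ne_zero),
    roots_mul (mul_ne_zero (pow_ne_zero _ X_ne_zero) (charpoly_monic _).ne_zero),
    roots_X_pow, roots_X_pow, Multiset.nsmul_singleton, Multiset.nsmul_singleton,
    add_comm, add_comm (Multiset.replicate _ _)] at h

theorem vnEntropy_eq_neg_sum_roots_charpoly {n : Type*} [Fintype n] [DecidableEq n]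
    {M : Matrix n n ℂ} (hM : M.IsHermitian) :
    vnEntropy M = -(M.charpoly.roots.map fun z => z.re * Real.logb 2 z.re).sum := by
  rw [vnEntropy, dif_pos hM, hM.roots_charpoly_eq_eigenvalues, Multiset.map_map]
  rfl

theorem vnEntropy_transpose {n : Type*} [Fintype n] [DecidableEq n] {M : Matrix n n ℂ}
    (hM : M.IsHermitian) : vnEntropy Mᵀ = vnEntropy M := by
  rw [vnEntropy_eq_neg_sum_roots_charpoly hM.transpose, vnEntropy_eq_neg_sum_roots_charpoly hM,
    charpoly_transpose]

theorem vnEntropy_mul_comm {m n : Type*} [Fintype m] [DecidableEq m] [Fintype n] [DecidableEq n]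
    {A : Matrix m n ℂ} {B : Matrix n m ℂ} (hAB : (A * B).IsHermitian)
    (hBA : (B * A).IsHermitian) :
    vnEntropy (A * B) = vnEntropy (B * A) := by
  have h := congrArg (fun s => (s.map fun z : ℂ => z.re * Real.logb 2 z.re).sum)
    (roots_charpoly_mul_add_replicate_zero A B)
  simp only [Multiset.map_add, Multiset.sum_add, Multiset.map_replicate, Complex.zero_re,
    zero_mul, Multiset.sum_replicate, smul_zero, add_zero] at h
  rw [vnEntropy_eq_neg_sum_roots_charpoly hAB, vnEntropy_eq_neg_sum_roots_charpoly hBA, h]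

theorem vnEntropy_smul_mul_conjTranspose {m n : Type*} [Fintype m] [DecidableEq m] [Fintype n]
    [DecidableEq n] {c : ℂ} (hc : IsSelfAdjoint c) (Ψ : Matrix m n ℂ) :
    vnEntropy (c • (Ψ * Ψᴴ)) = vnEntropy (c • (Ψᴴ * Ψ))ᵀ := by
  have hP := (isHermitian_mul_conjTranspose_self Ψ).smul hc
  have hQ := (isHermitian_conjTranspose_mul_self Ψ).smul hc
  rw [vnEntropy_transpose hQ, ← Matrix.mul_smul, ← Matrix.smul_mul]
  rw [← Matrix.mul_smul] at hP
  rw [← Matrix.smul_mul] at hQ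
  exact vnEntropy_mul_comm hP hQ

section ChannelStates

variable {Z B R : Type*}

/-- `c Σ_z |z⟩⟨z| ⊗ Tr_R |V z⟩⟨V z|`; with `V z ∘ Prod.swap` in place of `V z` it is the cq
state of `Z` and `R`. -/
noncomputable def cqState [DecidableEq Z] [Fintype R] (c : ℂ) (V : Z → B × R → ℂ) :
    Matrix (Z × B) (Z × B) ℂ :=
  of fun a b => if a.1 = b.1 then c * ∑ r, V a.1 (a.2, r) * conj (V a.1 (b.2, r)) else 0

noncomputable def channelState [Fintype R] (c : ℂ) (V : Z → B × R → ℂ) :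
    Matrix (Z × B) (Z × B) ℂ :=
  of fun a b => c * ∑ r, V a.1 (a.2, r) * conj (V b.1 (b.2, r))

/-- The unnormalised `ψ = Σ_z |z⟩^A |z⟩^C V z` as a matrix with rows `AB` and columns `CR`. -/
def stateABCR [DecidableEq Z] (V : Z → B × R → ℂ) : Matrix (Z × B) (Z × R) ℂ :=
  of fun p q => if p.1 = q.1 then V p.1 (p.2, q.2) else 0

/-- The unnormalised `(id ⊗ U_N)|Φ⟩` as a matrix with rows `AB` and columns `R`. -/
def stateABR (V : Z → B × R → ℂ) : Matrix (Z × B) R ℂ :=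
  of fun p r => V p.1 (p.2, r)

theorem cqState_eq_smul_mul_conjTranspose
    [Fintype Z] [DecidableEq Z] [Fintype R] (c : ℂ) (V : Z → B × R → ℂ) :
    cqState c V = c • (stateABCR V * (stateABCR V)ᴴ) := by
  ext a b
  by_cases h : a.1 = b.1 <;>
    simp [cqState, stateABCR, mul_apply, Fintype.sum_prod_type, h, Ne.symm]

theorem cqState_swap_eq_transpose
    [Fintype Z] [DecidableEq Z] [Fintype B] (c : ℂ) (V : Z → B × R → ℂ) :
    cqState c (fun z => V z ∘ Prod.swap) = (c • ((stateABCR V)ᴴ * stateABCR V))ᵀ := by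
  ext a b
  by_cases h : a.1 = b.1 <;>
    simp [cqState, stateABCR, mul_apply, Fintype.sum_prod_type, h, mul_comm]

theorem channelState_eq_smul_mul_conjTranspose [Fintype R] (c : ℂ) (V : Z → B × R → ℂ) :
    channelState c V = c • (stateABR V * (stateABR V)ᴴ) := by
  ext a b
  simp [channelState, stateABR, mul_apply, Finset.mul_sum]

theorem ptraceLeft_cqState_swap
    [Fintype Z] [DecidableEq Z] [Fintype B] (c : ℂ) (V : Z → B × R → ℂ) :
    ptraceLeft (cqState c (fun z => V z ∘ Prod.swap)) =
      (c • ((stateABR V)ᴴ * stateABR V))ᵀ := by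
  ext i j
  simp [cqState, stateABR, ptraceLeft, mul_apply, Fintype.sum_prod_type, Finset.mul_sum, mul_comm]

theorem ptraceLeft_cqState
    [Fintype Z] [DecidableEq Z] [Fintype R] (c : ℂ) (V : Z → B × R → ℂ) :
    ptraceLeft (cqState c V) = ptraceLeft (channelState c V) := by
  ext i j
  simp [cqState, channelState, ptraceLeft]

theorem ptraceRight_cqState_swap
    [DecidableEq Z] [Fintype B] [Fintype R] (c : ℂ) (V : Z → B × R → ℂ) :
    ptraceRight (cqState c (fun z => V z ∘ Prod.swap)) = ptraceRight (cqState c V) := by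
  ext z z'
  by_cases h : z = z'
  · subst h
    simp only [ptraceRight, cqState, of_apply, if_pos, Function.comp_apply, Prod.swap_prod_mk,
      ← Finset.mul_sum]
    rw [Finset.sum_comm]
  · simp [cqState, ptraceRight, h]

end ChannelStates

theorem amplitude_difference_eq_coherent_info_general {B R : Type*}
    [Fintype B] [DecidableEq B] [Fintype R] [DecidableEq R]
    (V : Fin 2 → B × R → ℂ) :
    -- τ^{AB} = (id ⊗ N)(Φ^{AA'})
    let τ : Matrix (Fin 2 × B) (Fin 2 × B) ℂ := Matrix.of fun a b =>
      (1/2 : ℂ) * ∑ r, V a.1 (a.2, r) * conj (V b.1 (b.2, r))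
    -- cq state of the amplitude variable Z and Bob's output B
    let ρZB : Matrix (Fin 2 × B) (Fin 2 × B) ℂ := Matrix.of fun a b =>
      if a.1 = b.1 then (1/2 : ℂ) * ∑ r, V a.1 (a.2, r) * conj (V a.1 (b.2, r)) else 0
    -- cq state of the amplitude variable Z and the reservoir R
    let ρZR : Matrix (Fin 2 × R) (Fin 2 × R) ℂ := Matrix.of fun a b =>
      if a.1 = b.1 then (1/2 : ℂ) * ∑ bb, V a.1 (bb, a.2) * conj (V a.1 (bb, b.2)) else 0
    mutInfo ρZB - mutInfo ρZR = vnEntropy (ptraceLeft τ) - vnEntropy τ := by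
  intro τ ρZB ρZR
  have hτ : τ = channelState (1/2) V := rfl
  have hZB : ρZB = cqState (1/2) V := rfl
  have hZR : ρZR = cqState (1/2) (fun z => V z ∘ Prod.swap) := rfl
  have half : IsSelfAdjoint (1/2 : ℂ) := by simp
  have hZ : ptraceRight ρZB = ptraceRight ρZR := by
    rw [hZB, hZR, ptraceRight_cqState_swap]
  have hB : ptraceLeft ρZB = ptraceLeft τ := by
    rw [hZB, hτ, ptraceLeft_cqState]
  have hABCR : vnEntropy ρZB = vnEntropy ρZR := by
    rw [hZB, hZR, cqState_eq_smul_mul_conjTranspose, cqState_swap_eq_transpose,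
      vnEntropy_smul_mul_conjTranspose half]
  have hABR : vnEntropy (ptraceLeft ρZR) = vnEntropy τ := by
    rw [hZR, hτ, ptraceLeft_cqState_swap, channelState_eq_smul_mul_conjTranspose,
      vnEntropy_smul_mul_conjTranspose half]
  simp only [mutInfo, hZ, hB, hABCR, hABR]
  ring

/-- Let `U_N : |z⟩ ↦ V z` (with `V` an isometry into `B ⊗ R`) be an isometric
extension of a qubit channel `N`, let `τ^{AB} = (id ⊗ N)(Φ^{AA'})` with `Φ` the
maximally entangled qubit state, and let `|ψ⟩^{ABCR}` be the channel state
`(1/√2) Σ_z |z⟩^A |z⟩^C U_N|z⟩`.  Then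
`I(Z^A;B)_ψ - I(Z^A;R)_ψ = H(B)_τ - H(AB)_τ`,
i.e. the difference of the amplitude information to Bob and to the reservoir
equals the coherent information of `N`. -/
theorem amplitude_difference_eq_coherent_info {B R : Type*}
    [Fintype B] [DecidableEq B] [Fintype R] [DecidableEq R]
    (V : Fin 2 → B × R → ℂ)
    (hiso : ∀ z z' : Fin 2, ∑ i, conj (V z i) * V z' i = if z = z' then 1 else 0) :
    -- τ^{AB} = (id ⊗ N)(Φ^{AA'})
    let τ : Matrix (Fin 2 × B) (Fin 2 × B) ℂ := Matrix.of fun a b =>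
      (1/2 : ℂ) * ∑ r, V a.1 (a.2, r) * conj (V b.1 (b.2, r))
    -- cq state of the amplitude variable Z and Bob's output B
    let ρZB : Matrix (Fin 2 × B) (Fin 2 × B) ℂ := Matrix.of fun a b =>
      if a.1 = b.1 then (1/2 : ℂ) * ∑ r, V a.1 (a.2, r) * conj (V a.1 (b.2, r)) else 0
    -- cq state of the amplitude variable Z and the reservoir R
    let ρZR : Matrix (Fin 2 × R) (Fin 2 × R) ℂ := Matrix.of fun a b =>
      if a.1 = b.1 then (1/2 : ℂ) * ∑ bb, V a.1 (bb, a.2) * conj (V a.1 (bb, b.2)) else 0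
    mutInfo ρZB - mutInfo ρZR = vnEntropy (ptraceLeft τ) - vnEntropy τ :=
  amplitude_difference_eq_coherent_info_general V
end

section
/- For the extremal process F'_{n+1} = (F'_n)² if b_n = 0 and F'_{n+1} = 1-(1-F'_n)² if b_n = 1, define the complementary process G'_n by G'_0 = 1 - F'_0 with complementary bit choices (b_n replaced by 1-b_n). Then G'_n = 1 - F''_n where F''_n is the process started at 1 - F'_0 with bits 1-b_n; consequently if F'_0 + G'_0 ≤ 1, i.e. the initial values satisfy the constraint, then for every realization, F'_n and G'_n cannot both converge to 1. -/
/-!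
Conjugating by `t ↦ 1 - t` exchanges the two branches `t ↦ t ^ 2` and `t ↦ 1 - (1 - t) ^ 2` of
the process, so flipping every bit and starting at `1 - x` yields `1 - F'_n`. Both branches are
monotone on `[0, 1]`, hence so is every `F'_n` as a function of the starting value; starting the
complementary process at `y ≤ 1 - x` therefore keeps `F'_n + G'_n ≤ 1` for all `n`, which
forbids both from tending to `1`.
-/

open Filter

/-- The extremal (BEC) fidelity evolution process. -/
noncomputable def polarF (b : ℕ → Bool) (x : ℝ) : ℕ → ℝ
  | 0 => x
  | n + 1 => if b n then 2 * polarF b x n - (polarF b x n) ^ 2 else (polarF b x n) ^ 2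

theorem polarF_mem_Icc (b : ℕ → Bool) {x : ℝ} (hx : x ∈ Set.Icc (0 : ℝ) 1) (n : ℕ) :
    polarF b x n ∈ Set.Icc (0 : ℝ) 1 := by
  induction n with
  | zero => exact hx
  | succ n ih =>
    obtain ⟨h0, h1⟩ := ih
    simp only [polarF]
    split <;> constructor <;> nlinarith

theorem polarF_monotoneOn (b : ℕ → Bool) (n : ℕ) :
    MonotoneOn (fun x => polarF b x n) (Set.Icc 0 1) := by
  intro x hx y hy hxy
  induction n with
  | zero => exact hxy
  | succ n ih =>
    obtain ⟨hx0, hx1⟩ := polarF_mem_Icc b hx n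
    obtain ⟨hy0, hy1⟩ := polarF_mem_Icc b hy n
    simp only [polarF] at ih ⊢
    split <;> nlinarith

theorem polarF_not_one_sub (b : ℕ → Bool) (x : ℝ) (n : ℕ) :
    polarF (fun k => !(b k)) (1 - x) n = 1 - polarF b x n := by
  induction n with
  | zero => rfl
  | succ n ih =>
    simp only [polarF, ih]
    cases b n <;> simp only [Bool.not_false, Bool.not_true, Bool.false_eq_true, ↓reduceIte] <;> ring

theorem polarF_add_polarF_not_le_one (b : ℕ → Bool) {x y : ℝ}
    (hx : x ∈ Set.Icc (0 : ℝ) 1) (hy : y ∈ Set.Icc (0 : ℝ) 1) (hxy : x + y ≤ 1) (n : ℕ) :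
    polarF b x n + polarF (fun k => !(b k)) y n ≤ 1 := by
  have h1x : 1 - x ∈ Set.Icc (0 : ℝ) 1 := ⟨by linarith [hx.2], by linarith [hx.1]⟩
  have := polarF_monotoneOn (fun k => !(b k)) n hy h1x (by linarith)
  simp only [polarF_not_one_sub] at this
  linarith

/-- The process with complementary bit choices started at `1 - F'_0` is the
complement `1 - F'_n` of the original process; consequently, if the initial
values of the original process and of a complementary-bit process satisfy
`F'_0 + G'_0 ≤ 1`, then the two processes cannot both converge to `1`. -/
theorem polarF_complement (b : ℕ → Bool) (x y : ℝ)
    (hx : x ∈ Set.Icc (0:ℝ) 1) (hy : y ∈ Set.Icc (0:ℝ) 1) :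
    (∀ n, polarF (fun k => !(b k)) (1 - x) n = 1 - polarF b x n) ∧
    (x + y ≤ 1 →
      ¬ (Tendsto (polarF b x) atTop (nhds 1) ∧
         Tendsto (polarF (fun k => !(b k)) y) atTop (nhds 1))) := by
  refine ⟨polarF_not_one_sub b x, fun hxy ⟨hF, hG⟩ => ?_⟩
  have h2le1 : (1 + 1 : ℝ) ≤ 1 :=
    le_of_tendsto' (hF.add hG) (polarF_add_polarF_not_le_one b hx hy hxy)
  norm_num at h2le1
end

section
/- Let p ∈ [0,1/2) and define the BEC fidelity recursion F(q, b) as above. If for a string b we have F(p, b) close to 1 (the channel is bad), then F(p, b̄') is close to 0 (the complementary channel is good), in the precise sense: F(p, b) + F(p, b̄') ≤ F(p,b) + F(1-p, b̄') = 1 + (F(p,b̄') - F(1-p,b̄')) ≤ 1, using monotonicity since p ≤ 1-p. -/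
/-!
Both steps of the recursion are increasing self-maps of `[0, 1]`, so `F(·, b)` is monotone in the
erasure probability, and they are exchanged by the reflection `x ↦ 1 - x`, since
`1 - (2x - x²) = (1 - x)²`. Hence `F(p, b̄) ≤ F(1 - p, b̄) = 1 - F(p, b)` for `p ≤ 1/2`.
-/

/-- BEC-synthesized fidelity recursion. -/
noncomputable def becF (p : ℝ) : List Bool → ℝ
  | [] => p
  | bit :: rest => if bit then 2 * becF p rest - (becF p rest) ^ 2 else (becF p rest) ^ 2

open Set

lemma becF_mem_Icc {p : ℝ} (hp : p ∈ Icc (0 : ℝ) 1) (b : List Bool) :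
    becF p b ∈ Icc (0 : ℝ) 1 := by
  induction b with
  | nil => exact hp
  | cons bit rest ih =>
    obtain ⟨h0, h1⟩ := ih
    cases bit <;> simp only [becF, Bool.false_eq_true, if_false, if_true] <;>
      constructor <;> nlinarith

lemma becF_monotoneOn (b : List Bool) : MonotoneOn (fun p => becF p b) (Icc 0 1) := by
  intro x hx y hy hxy
  induction b with
  | nil => exact hxy
  | cons bit rest ih =>
    obtain ⟨hx0, hx1⟩ := becF_mem_Icc hx rest
    obtain ⟨hy0, hy1⟩ := becF_mem_Icc hy rest
    cases bit <;> simp only [becF, Bool.false_eq_true, if_false, if_true] <;> nlinarith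

lemma becF_one_sub_map_not (p : ℝ) (b : List Bool) :
    becF (1 - p) (b.map (fun t => !t)) = 1 - becF p b := by
  induction b with
  | nil => rfl
  | cons bit rest ih =>
    cases bit <;> simp only [List.map_cons, becF, Bool.not_true, Bool.not_false,
      Bool.false_eq_true, if_true, if_false, ih] <;> ring

/-- For erasure probability `p < 1/2`, no index can be bad for both the
amplitude recursion and the complementary phase recursion:
`F(p, b) + F(p, b̄) ≤ 1` where `b̄` is the bitwise complement of `b`. -/
theorem becF_no_doubly_bad (p : ℝ) (hp : p ∈ Set.Ico (0:ℝ) (1/2)) (b : List Bool) :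
    becF p b + becF p (b.map (fun t => !t)) ≤ 1 := by
  obtain ⟨hp0, hp_half⟩ := hp
  have hmono : becF p (b.map (fun t => !t)) ≤ becF (1 - p) (b.map (fun t => !t)) :=
    becF_monotoneOn _ ⟨hp0, by linarith⟩ ⟨by linarith, by linarith⟩ (by linarith)
  linarith [becF_one_sub_map_not p b]
end
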